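/- n-step transition probabilities and non-convergence of CM2: for every x₀ ∈ (0,1) and n ≥ 1, pⁿ(x₀,{x₀^{2ⁿ}}) = ∏_{k=0}^{n−1} (1 − x₀^{2ᵏ}) and pⁿ(x₀,{0}) = 1 − ∏_{k=0}^{n−1} (1 − x₀^{2ᵏ}); the products decrease and converge as n → ∞ to a limit γ(x₀) = ∏_{k=0}^∞ (1 − x₀^{2ᵏ}) with 0 < γ(x₀) < 1. Consequently the total variation distance ‖μ_n − δ₀‖ does not tend to 0; in fact pⁿ(x₀,{0}) → 1 − γ(x₀) < 1. -/

import Mathlib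

open MeasureTheory Set Filter Topology Function

/-- A bounded finitely additive set function on the σ-algebra. -/
def IsFinAdd {X : Type*} [MeasurableSpace X] (μ : Set X → ℝ) : Prop :=
  μ ∅ = 0 ∧ ∀ E F : Set X, MeasurableSet E → MeasurableSet F → Disjoint E F →
    μ (E ∪ F) = μ E + μ F

/-- Nonnegativity on measurable sets. -/
def IsNonnegSF {X : Type*} [MeasurableSpace X] (μ : Set X → ℝ) : Prop :=
  ∀ E : Set X, MeasurableSet E → 0 ≤ μ E

/-- Countable additivity on the σ-algebra. -/
def IsCtblAdd {X : Type*} [MeasurableSpace X] (μ : Set X → ℝ) : Prop :=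
  ∀ E : ℕ → Set X, (∀ n, MeasurableSet (E n)) → Pairwise (Disjoint on E) →
    HasSum (fun n => μ (E n)) (μ (⋃ n, E n))

/-- A nonnegative finitely additive measure is purely finitely additive if the only
countably additive measure `lam` with `0 ≤ lam ≤ μ` is `lam = 0`. -/
def IsPurelyFinAdd {X : Type*} [MeasurableSpace X] (μ : Set X → ℝ) : Prop :=
  ∀ lam : Set X → ℝ, IsFinAdd lam → IsCtblAdd lam →
    (∀ E, MeasurableSet E → 0 ≤ lam E) → (∀ E, MeasurableSet E → lam E ≤ μ E) →
    ∀ E, MeasurableSet E → lam E = 0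

/-- The integral of a bounded measurable function with respect to a (finitely additive)
set function, defined by the layer-cake formula. -/
noncomputable def faIntegral {X : Type*} [MeasurableSpace X] (μ : Set X → ℝ) (f : X → ℝ) : ℝ :=
  (∫ t in Set.Ioi (0:ℝ), μ {x | t < f x}) - (∫ t in Set.Ioi (0:ℝ), μ {x | f x < -t})

/-- The Dirac measure at `y`, as a set function. -/
noncomputable def diracSF (y : ℝ) (E : Set ℝ) : ℝ := E.indicator (fun _ => (1:ℝ)) y

/-- The transition function of CM1: `p(x,·) = x·δ_{x²} + (1-x)·δ₀` on `(0,1)`,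
`p(0,·) = δ₀`, `p(1,·) = δ₁` (the formula below specializes correctly at `0` and `1`). -/
noncomputable def p1 (x : ℝ) (E : Set ℝ) : ℝ :=
  x * diracSF (x ^ 2) E + (1 - x) * diracSF 0 E

/-- The transition function of CM2: `p(x,·) = (1-x)·δ_{x²} + x·δ₀` on `(0,1)`,
`p(0,·) = δ₀`, `p(1,·) = δ₁`. -/
noncomputable def p2 (x : ℝ) (E : Set ℝ) : ℝ :=
  if x = 1 then diracSF 1 E else (1 - x) * diracSF (x ^ 2) E + x * diracSF 0 E

/-- The transition function of CM3: the CM1 rule on `[0,1/2]`, the CM2 rule on `(1/2,1)`,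
`p(1,·) = δ₁`. -/
noncomputable def p3 (x : ℝ) (E : Set ℝ) : ℝ :=
  if x = 1 then diracSF 1 E
  else if x ≤ 1 / 2 then x * diracSF (x ^ 2) E + (1 - x) * diracSF 0 E
  else (1 - x) * diracSF (x ^ 2) E + x * diracSF 0 E

/-- The `n`-step transition function of CM1 (`p1n 0` is the identity kernel, and
`p1n (n+1) x E = ∫ p1n n (y,E) p(x,dy)` is the integral convolution). -/
noncomputable def p1n : ℕ → ℝ → Set ℝ → ℝ
  | 0 => fun x E => diracSF x E
  | n + 1 => fun x E => faIntegral (p1 x) fun y => p1n n y E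

/-- The `n`-step transition function of CM2. -/
noncomputable def p2n : ℕ → ℝ → Set ℝ → ℝ
  | 0 => fun x E => diracSF x E
  | n + 1 => fun x E => faIntegral (p2 x) fun y => p2n n y E

/-- The `n`-step transition function of CM3. -/
noncomputable def p3n : ℕ → ℝ → Set ℝ → ℝ
  | 0 => fun x E => diracSF x E
  | n + 1 => fun x E => faIntegral (p3 x) fun y => p3n n y E

/-!
Started at `x₀ ∈ (0,1)`, CM2 moves along the orbit `x₀, x₀², x₀⁴, …` until it jumps to the
absorbing state `0`; from `x₀^{2ᵏ}` it survives a step with probability `1 - x₀^{2ᵏ}`. So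
`pⁿ(x₀,·)` is the two-atom measure `Pₙ δ_{x₀^{2ⁿ}} + (1 - Pₙ) δ₀` with
`Pₙ = ∏_{k<n} (1 - x₀^{2ᵏ})`, and its total variation distance to `δ₀` is exactly `Pₙ`.
Since `∑ x₀^{2ᵏ} < ∞`, the survival probabilities `Pₙ` converge to `exp (∑ log (1 - x₀^{2ᵏ})) > 0`.
-/

lemma diracSF_setOf_lt (y t : ℝ) (g : ℝ → ℝ) :
    diracSF y {x | t < g x} = (Iio (g y)).indicator (fun _ => (1 : ℝ)) t := by
  simp [diracSF, indicator_apply]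

lemma integrableOn_Ioi_diracSF_setOf_lt (y : ℝ) (g : ℝ → ℝ) :
    IntegrableOn (fun t => diracSF y {x | t < g x}) (Ioi 0) := by
  simp only [diracSF_setOf_lt]
  rw [IntegrableOn, integrable_indicator_iff measurableSet_Iio]
  refine integrableOn_const ?_ (by simp)
  rw [Measure.restrict_apply measurableSet_Iio, Iio_inter_Ioi, Real.volume_Ioo]
  exact ENNReal.ofReal_ne_top

lemma setIntegral_Ioi_diracSF_setOf_lt (y : ℝ) (g : ℝ → ℝ) :
    ∫ t in Ioi 0, diracSF y {x | t < g x} = max (g y) 0 := by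
  simp only [diracSF_setOf_lt]
  rw [setIntegral_indicator measurableSet_Iio, Ioi_inter_Iio]
  simp

lemma setIntegral_Ioi_two_diracSF_setOf_lt (a b u v : ℝ) (g : ℝ → ℝ) :
    ∫ t in Ioi 0, (a * diracSF u {x | t < g x} + b * diracSF v {x | t < g x}) =
      a * max (g u) 0 + b * max (g v) 0 := by
  rw [integral_add ((integrableOn_Ioi_diracSF_setOf_lt u g).const_mul a)
      ((integrableOn_Ioi_diracSF_setOf_lt v g).const_mul b),
    integral_const_mul, integral_const_mul, setIntegral_Ioi_diracSF_setOf_lt,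
    setIntegral_Ioi_diracSF_setOf_lt]

lemma faIntegral_two_diracSF (a b u v : ℝ) (f : ℝ → ℝ) :
    faIntegral (fun E => a * diracSF u E + b * diracSF v E) f = a * f u + b * f v := by
  have hneg : ∀ t : ℝ, {x | f x < -t} = {x | t < -f x} := fun _ =>
    Set.ext fun _ => lt_neg (α := ℝ)
  unfold faIntegral
  simp only [hneg]
  rw [setIntegral_Ioi_two_diracSF_setOf_lt, setIntegral_Ioi_two_diracSF_setOf_lt]
  -- on `ℝ`, `max c 0` and `max (-c) 0` are definitionally `c⁺` and `c⁻`
  linear_combination a * posPart_sub_negPart (f u) + b * posPart_sub_negPart (f v)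

lemma p2_of_ne_one {x : ℝ} (hx : x ≠ 1) :
    p2 x = fun E => (1 - x) * diracSF (x ^ 2) E + x * diracSF 0 E := by
  funext E
  exact if_neg hx

lemma p2n_succ_of_ne_one {x : ℝ} (hx : x ≠ 1) (n : ℕ) (E : Set ℝ) :
    p2n (n + 1) x E = (1 - x) * p2n n (x ^ 2) E + x * p2n n 0 E := by
  show faIntegral (p2 x) _ = _
  rw [p2_of_ne_one hx, faIntegral_two_diracSF]

lemma p2n_zero_left (n : ℕ) (E : Set ℝ) : p2n n 0 E = diracSF 0 E := by
  induction n with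
  | zero => rfl
  | succ n ih => simp [p2n_succ_of_ne_one zero_ne_one, ih]

/-- The probability that CM2 started at `x` has not been absorbed at `0` after `n` steps. -/
def survivalProb (x : ℝ) (n : ℕ) : ℝ := ∏ k ∈ Finset.range n, (1 - x ^ 2 ^ k)

lemma survivalProb_succ (x : ℝ) (n : ℕ) :
    survivalProb x (n + 1) = (1 - x) * survivalProb (x ^ 2) n := by
  simp only [survivalProb, Finset.prod_range_succ', ← pow_mul, ← pow_succ', pow_zero, pow_one]
  ring

lemma survivalProb_nonneg {x : ℝ} (hx : |x| ≤ 1) (n : ℕ) : 0 ≤ survivalProb x n := by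
  refine Finset.prod_nonneg fun k _ => sub_nonneg.2 ((le_abs_self _).trans ?_)
  rw [abs_pow]
  exact pow_le_one₀ (abs_nonneg x) hx

lemma survivalProb_antitone {x : ℝ} (hx : x ∈ Icc 0 1) : Antitone (survivalProb x) := by
  refine antitone_nat_of_succ_le fun n => ?_
  rw [survivalProb, Finset.prod_range_succ]
  refine mul_le_of_le_one_right (survivalProb_nonneg (abs_le.2 ⟨?_, hx.2⟩) n) ?_
  · linarith [hx.1]
  · linarith [pow_nonneg hx.1 (2 ^ n)]

lemma p2n_eq {x : ℝ} (hx : |x| < 1) (n : ℕ) (E : Set ℝ) :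
    p2n n x E = survivalProb x n * diracSF (x ^ 2 ^ n) E +
      (1 - survivalProb x n) * diracSF 0 E := by
  induction n generalizing x with
  | zero => simp [p2n, survivalProb]
  | succ n ih =>
    have hx2 : |x ^ 2| < 1 := by rw [abs_pow]; exact pow_lt_one₀ (abs_nonneg x) hx two_ne_zero
    rw [p2n_succ_of_ne_one (fun h => by simp [h] at hx), ih hx2, p2n_zero_left,
      survivalProb_succ, ← pow_mul, ← pow_succ']
    ring

lemma p2n_singleton_pow {x : ℝ} (hx0 : x ≠ 0) (hx : |x| < 1) (n : ℕ) :
    p2n n x {x ^ 2 ^ n} = survivalProb x n := by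
  simp [p2n_eq hx, diracSF, eq_comm, hx0]

lemma p2n_singleton_zero {x : ℝ} (hx0 : x ≠ 0) (hx : |x| < 1) (n : ℕ) :
    p2n n x {0} = 1 - survivalProb x n := by
  simp [p2n_eq hx, diracSF, hx0]

lemma sSup_abs_p2n_sub_diracSF_zero {x : ℝ} (hx0 : x ≠ 0) (hx : |x| < 1) (n : ℕ) :
    sSup {r : ℝ | ∃ E : Set ℝ, MeasurableSet E ∧ r = |p2n n x E - diracSF 0 E|} =
      survivalProb x n := by
  have hP := survivalProb_nonneg hx.le n
  refine IsGreatest.csSup_eq ⟨⟨{0}, measurableSet_singleton 0, ?_⟩, ?_⟩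
  · simp [p2n_singleton_zero hx0 hx, diracSF, abs_of_nonneg hP]
  · rintro r ⟨E, -, rfl⟩
    have hδ : ∀ y, diracSF y E ∈ Icc (0 : ℝ) 1 := fun y => by
      by_cases hy : y ∈ E <;> simp [diracSF, hy]
    have hdiff : p2n n x E - diracSF 0 E =
        survivalProb x n * (diracSF (x ^ 2 ^ n) E - diracSF 0 E) := by
      rw [p2n_eq hx]; ring
    rw [hdiff, abs_mul, abs_of_nonneg hP]
    refine mul_le_of_le_one_right hP (abs_sub_le_iff.2 ⟨?_, ?_⟩) <;>
      linarith [(hδ (x ^ 2 ^ n)).1, (hδ (x ^ 2 ^ n)).2, (hδ 0).1, (hδ 0).2]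

lemma summable_pow_two_pow {x : ℝ} (hx : |x| < 1) : Summable fun k : ℕ => x ^ 2 ^ k := by
  refine .of_norm_bounded (summable_geometric_of_abs_lt_one (abs_abs x ▸ hx)) fun k => ?_
  rw [norm_pow, Real.norm_eq_abs]
  exact pow_le_pow_of_le_one (abs_nonneg x) hx.le Nat.lt_two_pow_self.le

lemma exists_pos_hasProd_one_sub {ι : Type*} {a : ι → ℝ} (ha : ∀ i, a i < 1) (hs : Summable a) :
    ∃ γ, 0 < γ ∧ HasProd (fun i => 1 - a i) γ := by
  have hlog : Summable fun i => Real.log (1 + -a i) := Real.summable_log_one_add_of_summable hs.neg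
  refine ⟨_, Real.exp_pos (∑' i, Real.log (1 - a i)),
    Real.hasProd_of_hasSum_log (fun i => sub_pos.2 (ha i)) ?_⟩
  simpa only [← sub_eq_add_neg] using hlog.hasSum

lemma exists_tendsto_survivalProb {x : ℝ} (hx : x ∈ Ioo 0 1) :
    ∃ γ, 0 < γ ∧ γ < 1 ∧ Tendsto (survivalProb x) atTop (𝓝 γ) := by
  have habs : |x| < 1 := abs_lt.2 ⟨by linarith [hx.1], hx.2⟩
  obtain ⟨γ, hγ, hprod⟩ := exists_pos_hasProd_one_sub
    (fun k => pow_lt_one₀ hx.1.le hx.2 (by positivity)) (summable_pow_two_pow habs)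
  have hlim : Tendsto (survivalProb x) atTop (𝓝 γ) := hprod.tendsto_prod_nat
  have hγ1 : γ ≤ survivalProb x 1 :=
    (survivalProb_antitone (Ioo_subset_Icc_self hx)).le_of_tendsto hlim 1
  refine ⟨γ, hγ, hγ1.trans_lt ?_, hlim⟩
  simp [survivalProb, hx.1]

/-- n-step transition probabilities and non-convergence of CM2: the atom masses are the
partial products `∏_{k=0}^{n-1}(1 - x₀^{2ᵏ})`, which decrease to a limit `γ ∈ (0,1)`;
hence `pⁿ(x₀,{0}) → 1 - γ < 1` and the total variation distance to `δ₀` does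
not tend to `0`. -/
theorem cm2_nstep_nonconvergence (x₀ : ℝ) (hx : x₀ ∈ Set.Ioo (0:ℝ) 1) :
    (∀ n : ℕ, 1 ≤ n →
      p2n n x₀ {x₀ ^ (2 ^ n)} = ∏ k ∈ Finset.range n, (1 - x₀ ^ (2 ^ k)) ∧
      p2n n x₀ {0} = 1 - ∏ k ∈ Finset.range n, (1 - x₀ ^ (2 ^ k))) ∧
    (Antitone fun n : ℕ => ∏ k ∈ Finset.range n, (1 - x₀ ^ (2 ^ k))) ∧
    ∃ γ : ℝ, 0 < γ ∧ γ < 1 ∧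
      Tendsto (fun n : ℕ => ∏ k ∈ Finset.range n, (1 - x₀ ^ (2 ^ k))) atTop (nhds γ) ∧
      Tendsto (fun n : ℕ => p2n n x₀ {0}) atTop (nhds (1 - γ)) ∧
      ¬ Tendsto (fun n : ℕ =>
          sSup {r : ℝ | ∃ E : Set ℝ, MeasurableSet E ∧ r = |p2n n x₀ E - diracSF 0 E|})
        atTop (nhds 0) := by
  have hx0 : x₀ ≠ 0 := hx.1.ne'
  have habs : |x₀| < 1 := abs_lt.2 ⟨by linarith [hx.1], hx.2⟩
  obtain ⟨γ, hγ0, hγ1, hlim⟩ := exists_tendsto_survivalProb hx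
  refine ⟨fun n _ => ⟨p2n_singleton_pow hx0 habs n, p2n_singleton_zero hx0 habs n⟩,
    survivalProb_antitone (Ioo_subset_Icc_self hx), γ, hγ0, hγ1, hlim, ?_, fun h => ?_⟩
  · simpa only [p2n_singleton_zero hx0 habs] using tendsto_const_nhds.sub hlim
  · simp only [sSup_abs_p2n_sub_diracSF_zero hx0 habs] at h
    exact hγ0.ne' (tendsto_nhds_unique hlim h)
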